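/- arXiv:1008.2266 — 5 statements merged into one kernel-verified Lean document; each statement's English description precedes it below -/
import Mathlib

section
/- Let h_d, h_c, h_r, h_sr > 0 and P > 0 with h_c²·P ≥ 2. Define R_s := min{R_A, R_B, R_C} − (1/2)·log₂(3) and assume (1/2)·C(h_sr²·P) ≥ R_s. If R_A ≤ R_B and R_A ≤ R_C, then R̄_sym − R_s ≤ 3/4 + (1/2)·log₂(3) + (1/2)·C(h_sr²/h_c²). -/
/-- `C(x) = (1/2) * log₂(1 + x)`. -/
noncomputable def Cfun (x : ℝ) : ℝ := (1 / 2) * Real.logb 2 (1 + x)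

/-- Genie-aided sum-rate upper bound `R̄_S1` for the symmetric IC-FDR. -/
noncomputable def RbarS1 (hd hc hr hsr P : ℝ) : ℝ :=
  Cfun (P * (hd ^ 2 + hc ^ 2 + hr ^ 2 + 2 * hr * Real.sqrt (hd ^ 2 + hc ^ 2)))
    + Cfun (hd ^ 2 * P / (1 + max (hc ^ 2) (hsr ^ 2) * P))
    + Cfun (hsr ^ 2 / hc ^ 2)

/-- `Θ₁₂` (and, with arguments swapped, `Θ₂₁`) with `σ² = h_c²/(h_c² + h_sr²)`. -/
noncomputable def Theta (hd hc hr hsr P1 ρ1 P2 ρ2 Pr : ℝ) : ℝ :=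
  hc ^ 2 * P1 + hr ^ 2 * (1 - ρ2 ^ 2) * Pr + 2 * hc * hr * ρ1 * Real.sqrt (P1 * Pr)
    + (hc ^ 2 / (hc ^ 2 + hsr ^ 2)) * (hd * Real.sqrt P2 + hr * ρ2 * Real.sqrt Pr) ^ 2
        / (hc ^ 2 / (hc ^ 2 + hsr ^ 2) + hc ^ 2 * P2)

/-- Genie-aided sum-rate upper bound `R̄_S2` for the symmetric IC-FDR. -/
noncomputable def RbarS2 (hd hc hr hsr P : ℝ) : ℝ :=
  sSup {y : ℝ | ∃ P1 P2 Pr ρ1 ρ2 : ℝ,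
    P1 ∈ Set.Icc 0 P ∧ P2 ∈ Set.Icc 0 P ∧ Pr ∈ Set.Icc 0 P ∧ ρ1 ^ 2 + ρ2 ^ 2 ≤ 1 ∧
    y = Cfun (Theta hd hc hr hsr P1 ρ1 P2 ρ2 Pr)
        + Cfun (Theta hd hc hr hsr P2 ρ2 P1 ρ1 Pr)
        + 2 * Cfun (hsr ^ 2 / hc ^ 2)}

/-- Cut-set individual-rate bound with Gaussian inputs. -/
noncomputable def Rind (hd hr P : ℝ) : ℝ := Cfun (P * (hd + hr) ^ 2)

/-- The minimum of the computable symmetric-rate upper bounds. -/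
noncomputable def RbarSym (hd hc hr hsr P : ℝ) : ℝ :=
  min (min ((1 / 2) * RbarS1 hd hc hr hsr P) ((1 / 2) * RbarS2 hd hc hr hsr P))
    (Rind hd hr P)

/-- `Φ = h_d²/h_c²`. -/
noncomputable def Phi (hd hc : ℝ) : ℝ := hd ^ 2 / hc ^ 2

/-- `Ψ = (√(h_d²P/2 − Φ) + √(h_r²P/2))²`. -/
noncomputable def Psi (hd hc hr P : ℝ) : ℝ :=
  (Real.sqrt (hd ^ 2 * P / 2 - Phi hd hc) + Real.sqrt (hr ^ 2 * P / 2)) ^ 2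

/-- `Ω = (√(h_c²P/2 − 1) + √(h_r²P/2))²`. -/
noncomputable def Omg (hc hr P : ℝ) : ℝ :=
  (Real.sqrt (hc ^ 2 * P / 2 - 1) + Real.sqrt (hr ^ 2 * P / 2)) ^ 2

noncomputable def RA (hd hc hr P : ℝ) : ℝ :=
  (1 / 2) * Cfun (2 + Phi hd hc)
    + (1 / 2) * Cfun (2 + Phi hd hc + Psi hd hc hr P + Omg hc hr P)

noncomputable def RB (hd hc hr P : ℝ) : ℝ := Cfun (2 + Phi hd hc + Psi hd hc hr P)

noncomputable def RC (hd hc hr P : ℝ) : ℝ := Cfun (2 + Phi hd hc + Omg hc hr P)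

set_option maxHeartbeats 1000000 in
theorem stmt6 (hd hc hr hsr P : ℝ)
    (hhd : 0 < hd) (hhc : 0 < hc) (hhr : 0 < hr) (hhsr : 0 < hsr) (hP : 0 < P)
    (hcP : 2 ≤ hc ^ 2 * P)
    (Rs : ℝ)
    (hRs : Rs = min (min (RA hd hc hr P) (RB hd hc hr P)) (RC hd hc hr P)
        - (1 / 2) * Real.logb 2 3)
    (hrelay : Rs ≤ (1 / 2) * Cfun (hsr ^ 2 * P))
    (hA1 : RA hd hc hr P ≤ RB hd hc hr P) (hA2 : RA hd hc hr P ≤ RC hd hc hr P) :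
    RbarSym hd hc hr hsr P - Rs ≤ 3 / 4 + (1 / 2) * Real.logb 2 3 + (1 / 2) * Cfun (hsr ^ 2 / hc ^ 2) := by

  -- abbreviations
  set T1 := P * (hd ^ 2 + hc ^ 2 + hr ^ 2 + 2 * hr * Real.sqrt (hd ^ 2 + hc ^ 2)) with hT1
  set T2 := hd ^ 2 * P / (1 + max (hc ^ 2) (hsr ^ 2) * P) with hT2
  set X := 2 + Phi hd hc + Psi hd hc hr P + Omg hc hr P with hX
  have hΦ0 : 0 ≤ Phi hd hc := by
    unfold Phi; positivity
  -- facts about Ψ and Ω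
  have ha : 0 ≤ hd ^ 2 * P / 2 - Phi hd hc := by
    unfold Phi
    rw [sub_nonneg, div_le_iff₀ (by positivity : (0:ℝ) < hc ^ 2)]
    nlinarith [sq_nonneg hd, hP.le]
  have hb : (0:ℝ) ≤ hr ^ 2 * P / 2 := by positivity
  have hcc : 0 ≤ hc ^ 2 * P / 2 - 1 := by linarith
  have hPsi : hd ^ 2 * P / 2 - Phi hd hc + hr ^ 2 * P / 2 ≤ Psi hd hc hr P := by
    unfold Psi
    nlinarith [Real.sq_sqrt ha, Real.sq_sqrt hb, Real.sqrt_nonneg (hd ^ 2 * P / 2 - Phi hd hc),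
      Real.sqrt_nonneg (hr ^ 2 * P / 2),
      mul_nonneg (Real.sqrt_nonneg (hd ^ 2 * P / 2 - Phi hd hc)) (Real.sqrt_nonneg (hr ^ 2 * P / 2))]
  have hOmg : hc ^ 2 * P / 2 - 1 + hr ^ 2 * P / 2 ≤ Omg hc hr P := by
    unfold Omg
    nlinarith [Real.sq_sqrt hcc, Real.sq_sqrt hb, Real.sqrt_nonneg (hc ^ 2 * P / 2 - 1),
      Real.sqrt_nonneg (hr ^ 2 * P / 2),
      mul_nonneg (Real.sqrt_nonneg (hc ^ 2 * P / 2 - 1)) (Real.sqrt_nonneg (hr ^ 2 * P / 2))]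
  have hXlb : 1 + hd ^ 2 * P / 2 + hc ^ 2 * P / 2 + hr ^ 2 * P ≤ X := by
    rw [hX]; linarith
  -- bound on T1
  have hs : (Real.sqrt (hd ^ 2 + hc ^ 2)) ^ 2 = hd ^ 2 + hc ^ 2 :=
    Real.sq_sqrt (by positivity)
  have hT1ub : T1 ≤ 2 * P * (hd ^ 2 + hc ^ 2 + hr ^ 2) := by
    rw [hT1]
    nlinarith [sq_nonneg (Real.sqrt (hd ^ 2 + hc ^ 2) - hr), hs, hP.le]
  have hT1pos : 0 < 1 + T1 := by
    rw [hT1]; positivity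
  have hkey : 1 + T1 ≤ 8 * (1 + X) := by
    linarith [hXlb, hT1ub]
  -- C(T1) ≤ 3/2 + C(X)
  have hXpos : 0 < 1 + X := by nlinarith [hXlb]
  have hC1 : Cfun T1 ≤ 3 / 2 + Cfun X := by
    unfold Cfun
    have h8 : Real.logb 2 (8 * (1 + X)) = 3 + Real.logb 2 (1 + X) := by
      rw [Real.logb_mul (by norm_num) (ne_of_gt hXpos)]
      congr 1
      rw [show (8:ℝ) = 2 ^ (3:ℕ) by norm_num, Real.logb_pow]
      simp [Real.logb_self_eq_one]
    have := Real.logb_le_logb_of_le (by norm_num : (1:ℝ) < 2) hT1pos hkey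
    rw [h8] at this
    linarith
  -- C(T2) ≤ C(2 + Φ)
  have hT2nn : 0 ≤ T2 := by rw [hT2]; positivity
  have hT2ub : T2 ≤ 2 + Phi hd hc := by
    rw [hT2]
    have hden : hc ^ 2 * P ≤ 1 + max (hc ^ 2) (hsr ^ 2) * P := by
      nlinarith [le_max_left (hc ^ 2) (hsr ^ 2), hP.le]
    have h1 : hd ^ 2 * P / (1 + max (hc ^ 2) (hsr ^ 2) * P) ≤ hd ^ 2 * P / (hc ^ 2 * P) :=
      div_le_div_of_nonneg_left (by positivity) (by nlinarith) hden
    have h2 : hd ^ 2 * P / (hc ^ 2 * P) = Phi hd hc := by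
      unfold Phi; field_simp
    linarith [h1, h2 ▸ h1]
  have hC2 : Cfun T2 ≤ Cfun (2 + Phi hd hc) := by
    unfold Cfun
    have := Real.logb_le_logb_of_le (by norm_num : (1:ℝ) < 2)
      (by linarith : (0:ℝ) < 1 + T2) (by linarith : 1 + T2 ≤ 1 + (2 + Phi hd hc))
    linarith
  -- put it together
  have hmin : min (min (RA hd hc hr P) (RB hd hc hr P)) (RC hd hc hr P) = RA hd hc hr P := by
    rw [min_eq_left hA1, min_eq_left hA2]
  have hsym : RbarSym hd hc hr hsr P ≤ (1/2) * RbarS1 hd hc hr hsr P :=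
    le_trans (min_le_left _ _) (min_le_left _ _)
  have hRA : RA hd hc hr P = (1/2) * Cfun (2 + Phi hd hc) + (1/2) * Cfun X := rfl
  have hS1 : RbarS1 hd hc hr hsr P = Cfun T1 + Cfun T2 + Cfun (hsr ^ 2 / hc ^ 2) := rfl
  rw [hRs, hmin]
  rw [hS1] at hsym
  linarith [hsym, hC1, hC2]
end

section
/- Let h_d, h_c, h_r, h_sr > 0 and P > 0 with h_c²·P ≥ 2. Define R_s := min{R_A, R_B, R_C} − (1/2)·log₂(3) and assume (1/2)·C(h_sr²·P) ≥ R_s. If R_B ≤ R_A and R_B ≤ R_C, then R̄_sym − R_s ≤ 1 + (1/2)·log₂(3). -/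
theorem stmt7 (hd hc hr hsr P : ℝ)
    (hhd : 0 < hd) (hhc : 0 < hc) (hhr : 0 < hr) (hhsr : 0 < hsr) (hP : 0 < P)
    (hcP : 2 ≤ hc ^ 2 * P)
    (Rs : ℝ)
    (hRs : Rs = min (min (RA hd hc hr P) (RB hd hc hr P)) (RC hd hc hr P)
        - (1 / 2) * Real.logb 2 3)
    (hrelay : Rs ≤ (1 / 2) * Cfun (hsr ^ 2 * P))
    (hB1 : RB hd hc hr P ≤ RA hd hc hr P) (hB2 : RB hd hc hr P ≤ RC hd hc hr P) :
    RbarSym hd hc hr hsr P - Rs ≤ 1 + (1 / 2) * Real.logb 2 3 := by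
  -- Rs = RB - (1/2)log2 3
  have hmin : min (min (RA hd hc hr P) (RB hd hc hr P)) (RC hd hc hr P)
      = RB hd hc hr P := by
    rw [min_eq_right hB1, min_eq_left hB2]
  rw [hRs, hmin]
  have key : Rind hd hr P ≤ RB hd hc hr P + 1 := by
    set a := Real.sqrt (hd ^ 2 * P / 2 - Phi hd hc) with ha
    set b := Real.sqrt (hr ^ 2 * P / 2) with hb
    have ha0 : 0 ≤ a := Real.sqrt_nonneg _
    have hb0 : 0 ≤ b := Real.sqrt_nonneg _
    have ha2 : hd ^ 2 * P / 2 - Phi hd hc ≤ a ^ 2 := by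
      rcases le_or_gt 0 (hd ^ 2 * P / 2 - Phi hd hc) with h | h
      · rw [ha, Real.sq_sqrt h]
      · have : a ^ 2 = 0 ∨ 0 ≤ a ^ 2 := Or.inr (sq_nonneg a)
        nlinarith [sq_nonneg a]
    have hb2 : b ^ 2 = hr ^ 2 * P / 2 := by
      rw [hb, Real.sq_sqrt (by positivity)]
    have hPsi : Psi hd hc hr P = (a + b) ^ 2 := rfl
    have hPhi0 : 0 ≤ Phi hd hc := by
      have : (0:ℝ) < hc ^ 2 := by positivity
      exact div_nonneg (sq_nonneg _) this.le
    have hnum : 1 + P * (hd + hr) ^ 2 ≤ 4 * (1 + (2 + Phi hd hc + Psi hd hc hr P)) := by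
      rw [hPsi]
      nlinarith [mul_nonneg ha0 hb0, sq_nonneg ((hd - hr) * Real.sqrt P),
        Real.sq_sqrt hP.le, sq_nonneg (hd - hr), mul_pos hP hP]
    have hL0 : (0:ℝ) < 1 + P * (hd + hr) ^ 2 := by positivity
    have hlog : Real.logb 2 (1 + P * (hd + hr) ^ 2)
        ≤ Real.logb 2 (4 * (1 + (2 + Phi hd hc + Psi hd hc hr P))) :=
      Real.logb_le_logb_of_le one_lt_two hL0 hnum
    have h4 : Real.logb 2 (4 * (1 + (2 + Phi hd hc + Psi hd hc hr P)))
        = 2 + Real.logb 2 (1 + (2 + Phi hd hc + Psi hd hc hr P)) := by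
      have hpos : (0:ℝ) < 1 + (2 + Phi hd hc + Psi hd hc hr P) := by
        have : 0 ≤ Psi hd hc hr P := sq_nonneg _
        linarith
      rw [Real.logb, Real.logb, Real.log_mul (by norm_num) (ne_of_gt hpos)]
      have : Real.log 4 = 2 * Real.log 2 := by
        rw [show (4:ℝ) = 2 ^ 2 by norm_num, Real.log_pow]; push_cast; ring
      rw [this]
      field_simp
    unfold Rind RB Cfun
    rw [h4] at hlog
    linarith
  have hRbar : RbarSym hd hc hr hsr P ≤ Rind hd hr P := min_le_right _ _
  linarith
end

section
/- Let h_d, h_c, h_r, h_sr > 0 and P > 0 with h_c²·P ≥ 2. Define R_s := min{R_A, R_B, R_C} − (1/2)·log₂(3) and assume (1/2)·C(h_sr²·P) ≥ R_s. If R_C ≤ R_A and R_C ≤ R_B, then R̄_sym − R_s ≤ 1 + (1/2)·log₂(3) + (1/2)·log₂(5) + C(h_sr²/h_c²). -/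
set_option maxHeartbeats 1000000 in
lemma keyineq (u w b r g : ℝ) (hu : 0 ≤ u) (hw : 0 ≤ w) (hg : 0 ≤ g)
    (hb2 : 2 ≤ b) (hbw : b ≤ 2*w + 2) (hrw : r ≤ 2*w)
    (hrel : (3+u+w)^2 ≤ 9*(1+g*b)) :
    (1 + 2*(u*b + b + r))*(1+u) ≤ 400*((3+u+w)^2)*(1+g) := by
  have hb0 : (0:ℝ) < b := by linarith
  have c1 : 1 + 2*(u*b + b + r) ≤ 8*((1+u)*(1+w)) := by
    nlinarith [mul_le_mul_of_nonneg_left hbw hu]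
  have c3 : 4*((1+u)*(1+w)) ≤ (3+u+w)^2 := by nlinarith [sq_nonneg (u-w)]
  have c4 : (4*((1+u)*(1+w)))^2 ≤ ((3+u+w)^2)^2 := by
    have h0 : 0 ≤ 4*((1+u)*(1+w)) := by positivity
    exact pow_le_pow_left₀ h0 c3 2
  have k3 : (3+u+w)^2 ≤ 9*b*(1+g) := by nlinarith
  have h9b : (0:ℝ) < 9*b := by linarith
  have main : (1 + 2*(u*b + b + r))*(1+u) * (9*b) ≤ 400*((3+u+w)^2)*(1+g) * (9*b) := by
    calc (1 + 2*(u*b + b + r))*(1+u) * (9*b)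
        ≤ (8*((1+u)*(1+w)))*(1+u)*(9*b) := by
          apply mul_le_mul_of_nonneg_right (mul_le_mul_of_nonneg_right c1 (by linarith)) (by linarith)
      _ ≤ (8*((1+u)*(1+w)))*(1+u)*(18*(1+w)) := by
          apply mul_le_mul_of_nonneg_left (by linarith : 9*b ≤ 18*(1+w)) (by positivity)
      _ = 9*(4*((1+u)*(1+w)))^2 := by ring
      _ ≤ 9*((3+u+w)^2)^2 := by linarith
      _ ≤ 9*((3+u+w)^2 * (9*b*(1+g))) := by
          rw [pow_two ((3+u+w)^2)] at *
          nlinarith [sq_nonneg (3+u+w), k3]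
      _ ≤ 400*((3+u+w)^2)*(1+g) * (9*b) := by
          nlinarith [mul_nonneg (mul_nonneg (sq_nonneg (3+u+w)) hb0.le) (by linarith : (0:ℝ) ≤ 1+g)]
  exact le_of_mul_le_mul_right main h9b

set_option maxHeartbeats 1000000 in
lemma auxS1 (hd hc hr hsr P : ℝ)
    (hhd : 0 < hd) (hhc : 0 < hc) (hhr : 0 < hr) (hhsr : 0 < hsr) (hP : 0 < P)
    (hcP : 2 ≤ hc ^ 2 * P)
    (Rs : ℝ)
    (hRs : Rs = RC hd hc hr P - (1 / 2) * Real.logb 2 3)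
    (hrelay : Rs ≤ (1 / 2) * Cfun (hsr ^ 2 * P)) :
    (1/2) * RbarS1 hd hc hr hsr P - Rs ≤ 1 + (1 / 2) * Real.logb 2 3 + (1 / 2) * Real.logb 2 5 + Cfun (hsr ^ 2 / hc ^ 2) := by
  set u := Phi hd hc with hu_def
  set w := Omg hc hr P with hw_def
  set g := hsr ^ 2 / hc ^ 2 with hg_def
  set X1 := P * (hd ^ 2 + hc ^ 2 + hr ^ 2 + 2 * hr * Real.sqrt (hd ^ 2 + hc ^ 2)) with hX1_def
  set X2 := hd ^ 2 * P / (1 + max (hc ^ 2) (hsr ^ 2) * P) with hX2_def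
  have hc2 : (0:ℝ) < hc ^ 2 := pow_pos hhc 2
  have hu0 : 0 ≤ u := div_nonneg (sq_nonneg hd) (sq_nonneg hc)
  have hw0 : 0 ≤ w := by rw [hw_def]; unfold Omg; positivity
  have hg0 : 0 < g := div_pos (pow_pos hhsr 2) hc2
  have hS : (0:ℝ) < 3 + u + w := by linarith
  have hM : (0:ℝ) < 1 + hsr ^ 2 * P := by positivity
  -- X1 bound
  have hX1nn : 0 ≤ X1 := by
    rw [hX1_def]
    have h1 : 0 ≤ 2 * hr * Real.sqrt (hd ^ 2 + hc ^ 2) :=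
      mul_nonneg (by linarith) (Real.sqrt_nonneg _)
    nlinarith [sq_nonneg hd, sq_nonneg hc, sq_nonneg hr]
  have hX1le : X1 ≤ 2 * (hd ^ 2 * P + hc ^ 2 * P + hr ^ 2 * P) := by
    rw [hX1_def]
    have hs2 : (Real.sqrt (hd ^ 2 + hc ^ 2)) ^ 2 = hd ^ 2 + hc ^ 2 :=
      Real.sq_sqrt (by positivity)
    nlinarith [mul_nonneg hP.le (sq_nonneg (Real.sqrt (hd ^ 2 + hc ^ 2) - hr)), hs2]
  -- X2 bound
  have hden : (0:ℝ) < 1 + max (hc ^ 2) (hsr ^ 2) * P := by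
    have := le_max_left (hc ^ 2) (hsr ^ 2)
    nlinarith
  have hX2nn : 0 ≤ X2 := by
    rw [hX2_def]; positivity
  have hX2le : X2 ≤ u := by
    have h1 : hc ^ 2 * P ≤ 1 + max (hc ^ 2) (hsr ^ 2) * P := by
      have := mul_le_mul_of_nonneg_right (le_max_left (hc ^ 2) (hsr ^ 2)) hP.le
      linarith
    have h2 : X2 ≤ hd ^ 2 * P / (hc ^ 2 * P) := by
      rw [hX2_def]
      apply div_le_div_of_nonneg_left (by positivity) (by positivity) h1
    have h3 : hd ^ 2 * P / (hc ^ 2 * P) = u := by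
      rw [hu_def]; unfold Phi; rw [mul_div_mul_right _ _ (ne_of_gt hP)]
    linarith [h3 ▸ h2]
  -- Omega bounds
  have hsq1 : (Real.sqrt (hc ^ 2 * P / 2 - 1)) ^ 2 = hc ^ 2 * P / 2 - 1 :=
    Real.sq_sqrt (by linarith)
  have hsq2 : (Real.sqrt (hr ^ 2 * P / 2)) ^ 2 = hr ^ 2 * P / 2 :=
    Real.sq_sqrt (by positivity)
  have hn1 := Real.sqrt_nonneg (hc ^ 2 * P / 2 - 1)
  have hn2 := Real.sqrt_nonneg (hr ^ 2 * P / 2)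
  have hwr : hr ^ 2 * P ≤ 2 * w := by
    rw [hw_def]; unfold Omg; nlinarith
  have hwb : hc ^ 2 * P ≤ 2 * w + 2 := by
    rw [hw_def]; unfold Omg; nlinarith
  have hab : hd ^ 2 * P = u * (hc ^ 2 * P) := by
    rw [hu_def]; unfold Phi; field_simp
  -- relay consequence
  have hrcd : RC hd hc hr P = (1/2) * Real.logb 2 (3 + u + w) := by
    unfold RC Cfun
    rw [show (1:ℝ) + (2 + Phi hd hc + Omg hc hr P) = 3 + u + w from by rw [hu_def, hw_def]; ring]
  have hrel4 : (1/2) * Real.logb 2 (3 + u + w) - (1/2) * Real.logb 2 3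
      ≤ (1/4) * Real.logb 2 (1 + hsr ^ 2 * P) := by
    rw [hRs, hrcd] at hrelay
    have : Cfun (hsr ^ 2 * P) = (1/2) * Real.logb 2 (1 + hsr ^ 2 * P) := rfl
    rw [this] at hrelay
    linarith
  have hrel : (3 + u + w) ^ 2 ≤ 9 * (1 + hsr ^ 2 * P) := by
    have l1 : Real.logb 2 ((3 + u + w) ^ 2) = 2 * Real.logb 2 (3 + u + w) := by
      rw [Real.logb_pow]; norm_num
    have l2 : Real.logb 2 (9 * (1 + hsr ^ 2 * P))
        = 2 * Real.logb 2 3 + Real.logb 2 (1 + hsr ^ 2 * P) := by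
      rw [Real.logb_mul (by norm_num) (ne_of_gt hM)]
      rw [show (9:ℝ) = 3 ^ 2 from by norm_num, Real.logb_pow]
      norm_num
    exact (Real.logb_le_logb one_lt_two (pow_pos hS 2) (by positivity)).mp
      (by rw [l1, l2]; linarith)
  have hgb : hsr ^ 2 * P = g * (hc ^ 2 * P) := by
    rw [hg_def]; field_simp
  rw [hgb] at hrel
  -- key product inequality
  have key := keyineq u w (hc ^ 2 * P) (hr ^ 2 * P) g hu0 hw0 hg0.le hcP hwb hwr hrel
  have prod : (1 + X1) * (1 + X2) ≤ 400 * ((3 + u + w) ^ 2) * (1 + g) := by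
    calc (1 + X1) * (1 + X2)
        ≤ (1 + 2 * (hd ^ 2 * P + hc ^ 2 * P + hr ^ 2 * P)) * (1 + u) := by
          apply mul_le_mul (by linarith) (by linarith) (by linarith) (by nlinarith)
      _ = (1 + 2 * (u * (hc ^ 2 * P) + hc ^ 2 * P + hr ^ 2 * P)) * (1 + u) := by
          rw [hab]
      _ ≤ 400 * ((3 + u + w) ^ 2) * (1 + g) := key
  -- log chain
  have hA1 : (0:ℝ) < 1 + X1 := by linarith
  have hA2 : (0:ℝ) < 1 + X2 := by linarith
  have l400 : Real.logb 2 400 = 4 + 2 * Real.logb 2 5 := by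
    rw [show (400:ℝ) = 2 ^ 4 * 5 ^ 2 from by norm_num,
      Real.logb_mul (by norm_num) (by norm_num), Real.logb_pow, Real.logb_pow,
      Real.logb_self_eq_one one_lt_two]
    norm_num
  have lchain : Real.logb 2 (1 + X1) + Real.logb 2 (1 + X2)
      ≤ 4 + 2 * Real.logb 2 5 + 2 * Real.logb 2 (3 + u + w) + Real.logb 2 (1 + g) := by
    have m1 : Real.logb 2 (1 + X1) + Real.logb 2 (1 + X2)
        = Real.logb 2 ((1 + X1) * (1 + X2)) := (Real.logb_mul hA1.ne' hA2.ne').symm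
    have m2 : Real.logb 2 ((1 + X1) * (1 + X2))
        ≤ Real.logb 2 (400 * ((3 + u + w) ^ 2) * (1 + g)) :=
      (Real.logb_le_logb one_lt_two (mul_pos hA1 hA2) (by positivity)).mpr prod
    have m3 : Real.logb 2 (400 * ((3 + u + w) ^ 2) * (1 + g))
        = Real.logb 2 400 + 2 * Real.logb 2 (3 + u + w) + Real.logb 2 (1 + g) := by
      rw [Real.logb_mul (by positivity) (by positivity),
        Real.logb_mul (by norm_num) (by positivity), Real.logb_pow]
      push_cast; ring
    rw [m1]
    calc Real.logb 2 ((1 + X1) * (1 + X2)) ≤ _ := m2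
      _ = _ := m3
      _ = 4 + 2 * Real.logb 2 5 + 2 * Real.logb 2 (3 + u + w) + Real.logb 2 (1 + g) := by
          rw [l400]
  have hLg0 : 0 ≤ Real.logb 2 (1 + g) := Real.logb_nonneg one_lt_two (by linarith)
  have hS1 : RbarS1 hd hc hr hsr P = (1/2) * Real.logb 2 (1 + X1)
      + (1/2) * Real.logb 2 (1 + X2) + (1/2) * Real.logb 2 (1 + g) := rfl
  have hCg : Cfun g = (1/2) * Real.logb 2 (1 + g) := rfl
  rw [hRs, hrcd, hS1, hCg]
  linarith


theorem stmt8 (hd hc hr hsr P : ℝ)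
    (hhd : 0 < hd) (hhc : 0 < hc) (hhr : 0 < hr) (hhsr : 0 < hsr) (hP : 0 < P)
    (hcP : 2 ≤ hc ^ 2 * P)
    (Rs : ℝ)
    (hRs : Rs = min (min (RA hd hc hr P) (RB hd hc hr P)) (RC hd hc hr P)
        - (1 / 2) * Real.logb 2 3)
    (hrelay : Rs ≤ (1 / 2) * Cfun (hsr ^ 2 * P))
    (hC1 : RC hd hc hr P ≤ RA hd hc hr P) (hC2 : RC hd hc hr P ≤ RB hd hc hr P) :
    RbarSym hd hc hr hsr P - Rs ≤ 1 + (1 / 2) * Real.logb 2 3 + (1 / 2) * Real.logb 2 5 + Cfun (hsr ^ 2 / hc ^ 2) := by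
  have hmin : min (min (RA hd hc hr P) (RB hd hc hr P)) (RC hd hc hr P) = RC hd hc hr P :=
    min_eq_right (le_min hC1 hC2)
  rw [hmin] at hRs
  have haux := auxS1 hd hc hr hsr P hhd hhc hhr hhsr hP hcP Rs hRs hrelay
  have hsym : RbarSym hd hc hr hsr P ≤ (1/2) * RbarS1 hd hc hr hsr P := by
    unfold RbarSym
    exact le_trans (min_le_left _ _) (min_le_left _ _)
  linarith
end

section
/- Let h_d, h_c, h_r, h_sr > 0 and P > 0 with h_c²·P ≥ 2. Define R_s := min{R_A, R_B, R_C} − (1/2)·log₂(3) and assume (1/2)·C(h_sr²·P) ≥ R_s. Then, without any further case condition, R̄_sym − R_s ≤ 1 + (1/2)·log₂(3) + (1/2)·log₂(5) + C(h_sr²/h_c²); in particular the gap between the symmetric-rate upper bound R̄_sym and the achievable symmetric rate R_s is finite. -/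
/-! ### Auxiliary lemmas -/

lemma Cfun_nonneg {x : ℝ} (hx : 0 ≤ x) : 0 ≤ Cfun x := by
  have h : Real.logb 2 1 ≤ Real.logb 2 (1 + x) :=
    Real.logb_le_logb_of_le one_lt_two one_pos (by linarith)
  simp only [Real.logb_one] at h
  unfold Cfun; linarith

lemma Cfun_mono {x y : ℝ} (hx : 0 ≤ x) (hxy : x ≤ y) : Cfun x ≤ Cfun y := by
  have h : Real.logb 2 (1 + x) ≤ Real.logb 2 (1 + y) :=
    Real.logb_le_logb_of_le one_lt_two (by linarith) (by linarith)
  unfold Cfun; linarith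

lemma Cfun_le_add {x y K : ℝ} (hx : 0 ≤ x) (hy : 0 ≤ y) (hK : 1 ≤ K)
    (h : 1 + x ≤ K * (1 + y)) : Cfun x ≤ Cfun y + (1 / 2) * Real.logb 2 K := by
  have h1 : (0:ℝ) < 1 + x := by linarith
  have h2 : (0:ℝ) < 1 + y := by linarith
  have hK0 : (0:ℝ) < K := by linarith
  have hle : Real.logb 2 (1 + x) ≤ Real.logb 2 (K * (1 + y)) :=
    Real.logb_le_logb_of_le one_lt_two h1 h
  rw [Real.logb_mul (ne_of_gt hK0) (ne_of_gt h2)] at hle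
  unfold Cfun; linarith

lemma logb_two_four : Real.logb 2 4 = 2 := by
  have h2 : Real.log 2 ≠ 0 := ne_of_gt (Real.log_pos one_lt_two)
  rw [show (4:ℝ) = 2 ^ (2:ℕ) by norm_num, Real.logb, Real.log_pow]
  field_simp
  norm_num

lemma logb_two_eight : Real.logb 2 8 = 3 := by
  have h2 : Real.log 2 ≠ 0 := ne_of_gt (Real.log_pos one_lt_two)
  rw [show (8:ℝ) = 2 ^ (3:ℕ) by norm_num, Real.logb, Real.log_pow]
  field_simp
  norm_num

lemma one_le_logb_two_five : (1:ℝ) ≤ Real.logb 2 5 := by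
  have h := Real.logb_le_logb_of_le one_lt_two two_pos (by norm_num : (2:ℝ) ≤ 5)
  rwa [Real.logb_self_eq_one one_lt_two] at h

section Main

variable {hd hc hr hsr P : ℝ}

lemma psi_sub_nonneg (hhc : 0 < hc) (hP : 0 < P) (hcP : 2 ≤ hc ^ 2 * P) :
    0 ≤ hd ^ 2 * P / 2 - Phi hd hc := by
  unfold Phi
  rw [sub_nonneg, div_le_iff₀ (by positivity)]
  have h := mul_nonneg (sq_nonneg hd) (sub_nonneg.mpr hcP)
  linarith only [h]

lemma aux_RB (hhd : 0 < hd) (hhc : 0 < hc) (hhr : 0 < hr) (hP : 0 < P)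
    (hcP : 2 ≤ hc ^ 2 * P) : Rind hd hr P ≤ RB hd hc hr P + 1 := by
  have ha : 0 ≤ hd ^ 2 * P / 2 - Phi hd hc := psi_sub_nonneg hhc hP hcP
  have hb : 0 ≤ hr ^ 2 * P / 2 := by positivity
  have hΦ : 0 ≤ Phi hd hc := by unfold Phi; positivity
  have key : Rind hd hr P ≤ RB hd hc hr P + (1 / 2) * Real.logb 2 4 := by
    unfold Rind RB Psi
    apply Cfun_le_add (by positivity) (by positivity) (by norm_num)
    have s1 := Real.sq_sqrt ha
    have s2 := Real.sq_sqrt hb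
    have m := mul_nonneg (Real.sqrt_nonneg (hd ^ 2 * P / 2 - Phi hd hc))
      (Real.sqrt_nonneg (hr ^ 2 * P / 2))
    have mp := mul_nonneg hP.le (sq_nonneg (hd - hr))
    simp only [Phi] at s1 m ⊢
    linarith only [s1, s2, m, mp]
  rw [logb_two_four] at key
  linarith

lemma aux_RA (hhd : 0 < hd) (hhc : 0 < hc) (hhr : 0 < hr) (hhsr : 0 < hsr) (hP : 0 < P)
    (hcP : 2 ≤ hc ^ 2 * P) :
    (1 / 2) * RbarS1 hd hc hr hsr P ≤
      RA hd hc hr P + 1 / 2 + (1 / 2) * Cfun (hsr ^ 2 / hc ^ 2) := by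
  have ha : 0 ≤ hd ^ 2 * P / 2 - Phi hd hc := psi_sub_nonneg hhc hP hcP
  have hb : 0 ≤ hr ^ 2 * P / 2 := by positivity
  have hcc : 0 ≤ hc ^ 2 * P / 2 - 1 := by linarith
  have hΦ : 0 ≤ Phi hd hc := by unfold Phi; positivity
  have hs0 : 0 ≤ hd ^ 2 + hc ^ 2 := by positivity
  have p1 : Cfun (P * (hd ^ 2 + hc ^ 2 + hr ^ 2 + 2 * hr * Real.sqrt (hd ^ 2 + hc ^ 2))) ≤
      Cfun (2 + Phi hd hc + Psi hd hc hr P + Omg hc hr P) + (1 / 2) * Real.logb 2 4 := by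
    unfold Psi Omg
    apply Cfun_le_add (by positivity) (by positivity) (by norm_num)
    have s0 := Real.sq_sqrt hs0
    have s1 := Real.sq_sqrt ha
    have s2 := Real.sq_sqrt hb
    have s3 := Real.sq_sqrt hcc
    have m1 := mul_nonneg (Real.sqrt_nonneg (hd ^ 2 * P / 2 - Phi hd hc))
      (Real.sqrt_nonneg (hr ^ 2 * P / 2))
    have m2 := mul_nonneg (Real.sqrt_nonneg (hc ^ 2 * P / 2 - 1))
      (Real.sqrt_nonneg (hr ^ 2 * P / 2))
    have mp := mul_nonneg hP.le (sq_nonneg (Real.sqrt (hd ^ 2 + hc ^ 2) - hr))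
    have s0P : P * Real.sqrt (hd ^ 2 + hc ^ 2) ^ 2 = P * (hd ^ 2 + hc ^ 2) := by rw [s0]
    have mPr := mul_nonneg hP.le (sq_nonneg hr)
    simp only [Phi] at s1 m1 ⊢
    linarith only [s0P, s1, s2, s3, m1, m2, mp, mPr]
  have p2 : Cfun (hd ^ 2 * P / (1 + max (hc ^ 2) (hsr ^ 2) * P)) ≤ Cfun (2 + Phi hd hc) := by
    have hden : (0:ℝ) < 1 + max (hc ^ 2) (hsr ^ 2) * P := by
      have h0 : (0:ℝ) ≤ max (hc ^ 2) (hsr ^ 2) * P :=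
        mul_nonneg (le_max_of_le_left (sq_nonneg hc)) hP.le
      linarith only [h0]
    apply Cfun_mono (by positivity)
    have hm : hc ^ 2 ≤ max (hc ^ 2) (hsr ^ 2) := le_max_left _ _
    have h1 : hd ^ 2 * P / (1 + max (hc ^ 2) (hsr ^ 2) * P) ≤ Phi hd hc := by
      unfold Phi
      rw [div_le_div_iff₀ hden (by positivity)]
      have h := mul_nonneg (mul_nonneg (sq_nonneg hd) hP.le) (sub_nonneg.mpr hm)
      linarith only [h, sq_nonneg hd]
    linarith
  rw [logb_two_four] at p1
  unfold RbarS1 RA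
  linarith

set_option maxHeartbeats 1000000 in
lemma theta_le (hhd : 0 < hd) (hhc : 0 < hc) (hhr : 0 < hr) (hhsr : 0 < hsr) (hP : 0 < P)
    (hcP : 2 ≤ hc ^ 2 * P) {P1 ρ1 P2 ρ2 Pr : ℝ}
    (hP1 : P1 ∈ Set.Icc 0 P) (hP2 : P2 ∈ Set.Icc 0 P) (hPr : Pr ∈ Set.Icc 0 P)
    (hρ : ρ1 ^ 2 + ρ2 ^ 2 ≤ 1) :
    Cfun (Theta hd hc hr hsr P1 ρ1 P2 ρ2 Pr) ≤ RC hd hc hr P + 3 / 2 := by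
  obtain ⟨h10, h1P⟩ := hP1
  obtain ⟨h20, h2P⟩ := hP2
  obtain ⟨hr0, hrP⟩ := hPr
  set s2 : ℝ := hc ^ 2 / (hc ^ 2 + hsr ^ 2) with hs2def
  have hs0 : 0 < s2 := by positivity
  have hs1 : s2 ≤ 1 := by
    rw [hs2def, div_le_one (by positivity)]
    linarith only [sq_nonneg hsr]
  have hD : 0 < s2 + hc ^ 2 * P2 := by positivity
  -- facts about the square roots
  have hq0 : 0 ≤ Real.sqrt (P1 * Pr) := Real.sqrt_nonneg _
  have hqP : Real.sqrt (P1 * Pr) ≤ P := by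
    have h : P1 * Pr ≤ P ^ 2 := by
      rw [pow_two]; exact mul_le_mul h1P hrP hr0 hP.le
    calc Real.sqrt (P1 * Pr) ≤ Real.sqrt (P ^ 2) := Real.sqrt_le_sqrt h
    _ = P := Real.sqrt_sq hP.le
  have hsp2 : Real.sqrt P2 ^ 2 = P2 := Real.sq_sqrt h20
  have hspr : Real.sqrt Pr ^ 2 = Pr := Real.sq_sqrt hr0
  have hsp1 : Real.sqrt P1 ^ 2 = P1 := Real.sq_sqrt h10
  -- ρ bounds
  have hρ1 : ρ1 ^ 2 ≤ 1 := by linarith only [hρ, sq_nonneg ρ2]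
  have hρ2 : ρ2 ^ 2 ≤ 1 := by linarith only [hρ, sq_nonneg ρ1]
  have hρ1le : ρ1 ≤ 1 := by linarith only [hρ1, sq_nonneg (1 - ρ1)]
  -- numerator bound
  have hu : (hd * Real.sqrt P2) ^ 2 = hd ^ 2 * P2 := by rw [mul_pow, hsp2]
  have hv : (hr * ρ2 * Real.sqrt Pr) ^ 2 = hr ^ 2 * ρ2 ^ 2 * Pr := by
    rw [mul_pow, mul_pow, hspr]
  have hN : (hd * Real.sqrt P2 + hr * ρ2 * Real.sqrt Pr) ^ 2 ≤
      2 * hd ^ 2 * P2 + 2 * hr ^ 2 * Pr := by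
    have hsq := sq_nonneg (hd * Real.sqrt P2 - hr * ρ2 * Real.sqrt Pr)
    have hrem : 0 ≤ hr ^ 2 * (1 - ρ2 ^ 2) * Pr :=
      mul_nonneg (mul_nonneg (sq_nonneg hr) (by linarith only [hρ2])) hr0
    linarith only [hsq, hu, hv, hrem]
  -- last-term bound
  have hT4 : s2 * (hd * Real.sqrt P2 + hr * ρ2 * Real.sqrt Pr) ^ 2 / (s2 + hc ^ 2 * P2) ≤
      2 * (hd ^ 2 / hc ^ 2) + 2 * hr ^ 2 * P := by
    rw [div_le_iff₀ hD]
    have key : 2 * (hd ^ 2 / hc ^ 2) * (hc ^ 2 * P2) = 2 * hd ^ 2 * P2 := by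
      field_simp
    have e1 : s2 * (hd * Real.sqrt P2 + hr * ρ2 * Real.sqrt Pr) ^ 2 ≤
        s2 * (2 * hd ^ 2 * P2 + 2 * hr ^ 2 * Pr) :=
      mul_le_mul_of_nonneg_left hN hs0.le
    have e2 : s2 * (2 * hd ^ 2 * P2) ≤ 2 * hd ^ 2 * P2 := by
      have := mul_nonneg (sub_nonneg.mpr hs1)
        (mul_nonneg (mul_nonneg (by norm_num : (0:ℝ) ≤ 2) (sq_nonneg hd)) h20)
      linarith only [this]
    have e3 : s2 * (2 * hr ^ 2 * Pr) ≤ s2 * (2 * hr ^ 2 * P) := by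
      apply mul_le_mul_of_nonneg_left _ hs0.le
      have := mul_nonneg (sub_nonneg.mpr hrP) (sq_nonneg hr)
      linarith only [this]
    have e4 : 0 ≤ 2 * (hd ^ 2 / hc ^ 2) * s2 := by positivity
    have e5 : 0 ≤ 2 * hr ^ 2 * P * (hc ^ 2 * P2) := by positivity
    linarith only [e1, e2, e3, e4, e5, key]
  have hT4nn : 0 ≤ s2 * (hd * Real.sqrt P2 + hr * ρ2 * Real.sqrt Pr) ^ 2
      / (s2 + hc ^ 2 * P2) := by positivity
  -- nonnegativity of Theta
  have hw2 : Real.sqrt (1 - ρ2 ^ 2) ^ 2 = 1 - ρ2 ^ 2 := Real.sq_sqrt (by linarith only [hρ2])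
  have hw0 : 0 ≤ Real.sqrt (1 - ρ2 ^ 2) := Real.sqrt_nonneg _
  have hρ1w : -Real.sqrt (1 - ρ2 ^ 2) ≤ ρ1 := by
    have habs : |ρ1| ≤ Real.sqrt (1 - ρ2 ^ 2) := by
      rw [← Real.sqrt_sq_eq_abs]
      exact Real.sqrt_le_sqrt (by linarith only [hρ])
    have h2 := neg_abs_le ρ1
    linarith only [habs, h2]
  have hqmul : Real.sqrt (P1 * Pr) = Real.sqrt P1 * Real.sqrt Pr := Real.sqrt_mul h10 _
  have hfirst : 0 ≤ hc ^ 2 * P1 + hr ^ 2 * (1 - ρ2 ^ 2) * Pr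
      + 2 * hc * hr * ρ1 * Real.sqrt (P1 * Pr) := by
    rw [hqmul]
    have huu : (hc * Real.sqrt P1) ^ 2 = hc ^ 2 * P1 := by rw [mul_pow, hsp1]
    have hvv : (hr * (Real.sqrt (1 - ρ2 ^ 2) * Real.sqrt Pr)) ^ 2
        = hr ^ 2 * ((1 - ρ2 ^ 2) * Pr) := by rw [mul_pow, mul_pow, hw2, hspr]
    have hamgm : 2 * hc * hr * (Real.sqrt (1 - ρ2 ^ 2) * (Real.sqrt P1 * Real.sqrt Pr)) ≤
        hc ^ 2 * P1 + hr ^ 2 * (1 - ρ2 ^ 2) * Pr := by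
      have hsq := sq_nonneg (hc * Real.sqrt P1
        - hr * (Real.sqrt (1 - ρ2 ^ 2) * Real.sqrt Pr))
      linarith only [hsq, huu, hvv]
    have hcross : 0 ≤ (2 * hc * hr) * ((ρ1 + Real.sqrt (1 - ρ2 ^ 2))
        * (Real.sqrt P1 * Real.sqrt Pr)) := by
      apply mul_nonneg (by positivity)
      apply mul_nonneg (by linarith only [hρ1w])
      exact mul_nonneg (Real.sqrt_nonneg _) (Real.sqrt_nonneg _)
    linarith only [hamgm, hcross]
  have hθ0 : 0 ≤ Theta hd hc hr hsr P1 ρ1 P2 ρ2 Pr := by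
    unfold Theta
    rw [← hs2def]
    linarith only [hfirst, hT4nn]
  -- upper bound of Theta
  have hθle : Theta hd hc hr hsr P1 ρ1 P2 ρ2 Pr ≤
      2 * (hd ^ 2 / hc ^ 2) + 2 * hc ^ 2 * P + 4 * hr ^ 2 * P := by
    unfold Theta
    rw [← hs2def]
    have h1 : hc ^ 2 * P1 ≤ hc ^ 2 * P := mul_le_mul_of_nonneg_left h1P (sq_nonneg hc)
    have h2 : hr ^ 2 * (1 - ρ2 ^ 2) * Pr ≤ hr ^ 2 * P := by
      have ha' : (1 - ρ2 ^ 2) * Pr ≤ Pr := mul_le_of_le_one_left hr0 (by linarith only [sq_nonneg ρ2])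
      have := mul_le_mul_of_nonneg_left (le_trans ha' hrP) (sq_nonneg hr)
      linarith only [this]
    have h3 : 2 * hc * hr * ρ1 * Real.sqrt (P1 * Pr) ≤ hc ^ 2 * P + hr ^ 2 * P := by
      have hq' : ρ1 * Real.sqrt (P1 * Pr) ≤ P :=
        le_trans (mul_le_of_le_one_left hq0 hρ1le) hqP
      have t1 : 0 ≤ (2 * hc * hr) * (P - ρ1 * Real.sqrt (P1 * Pr)) :=
        mul_nonneg (by positivity) (by linarith only [hq'])
      have t2 : 0 ≤ P * (hc - hr) ^ 2 := mul_nonneg hP.le (sq_nonneg _)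
      linarith only [t1, t2]
    linarith only [h1, h2, h3, hT4]
  -- conclude via Cfun
  have hΦ : 0 ≤ hd ^ 2 / hc ^ 2 := by positivity
  have hcc : 0 ≤ hc ^ 2 * P / 2 - 1 := by linarith only [hcP]
  have hb : 0 ≤ hr ^ 2 * P / 2 := by positivity
  have hΩ : hc ^ 2 * P / 2 - 1 + hr ^ 2 * P / 2 ≤ Omg hc hr P := by
    unfold Omg
    have m1 := Real.sq_sqrt hcc
    have m2 := Real.sq_sqrt hb
    have m3 := mul_nonneg (Real.sqrt_nonneg (hc ^ 2 * P / 2 - 1))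
      (Real.sqrt_nonneg (hr ^ 2 * P / 2))
    linarith only [m1, m2, m3]
  have key : Cfun (Theta hd hc hr hsr P1 ρ1 P2 ρ2 Pr) ≤
      Cfun (2 + Phi hd hc + Omg hc hr P) + (1 / 2) * Real.logb 2 8 := by
    apply Cfun_le_add hθ0 (by unfold Phi Omg; positivity) (by norm_num)
    simp only [Phi]
    linarith only [hθle, hΩ, hΦ, hcP]
  rw [logb_two_eight] at key
  unfold RC
  linarith only [key]

lemma aux_RC (hhd : 0 < hd) (hhc : 0 < hc) (hhr : 0 < hr) (hhsr : 0 < hsr) (hP : 0 < P)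
    (hcP : 2 ≤ hc ^ 2 * P) :
    (1 / 2) * RbarS2 hd hc hr hsr P ≤ RC hd hc hr P + 3 / 2 + Cfun (hsr ^ 2 / hc ^ 2) := by
  have hRC : 0 ≤ RC hd hc hr P := by
    unfold RC
    apply Cfun_nonneg
    have hΦ : 0 ≤ Phi hd hc := by unfold Phi; positivity
    have : 0 ≤ Omg hc hr P := by unfold Omg; positivity
    linarith
  have hCs : 0 ≤ Cfun (hsr ^ 2 / hc ^ 2) := Cfun_nonneg (by positivity)
  have hsup : RbarS2 hd hc hr hsr P ≤
      2 * RC hd hc hr P + 3 + 2 * Cfun (hsr ^ 2 / hc ^ 2) := by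
    apply Real.sSup_le
    · rintro y ⟨P1, P2, Pr, ρ1, ρ2, hP1, hP2, hPr, hρ, rfl⟩
      have t1 := theta_le hhd hhc hhr hhsr hP hcP hP1 hP2 hPr hρ
      have t2 := theta_le (P1 := P2) (ρ1 := ρ2) (P2 := P1) (ρ2 := ρ1)
        hhd hhc hhr hhsr hP hcP hP2 hP1 hPr (by linarith)
      linarith
    · linarith
  linarith

end Main

theorem stmt9 (hd hc hr hsr P : ℝ)
    (hhd : 0 < hd) (hhc : 0 < hc) (hhr : 0 < hr) (hhsr : 0 < hsr) (hP : 0 < P)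
    (hcP : 2 ≤ hc ^ 2 * P)
    (Rs : ℝ)
    (hRs : Rs = min (min (RA hd hc hr P) (RB hd hc hr P)) (RC hd hc hr P)
        - (1 / 2) * Real.logb 2 3)
    (hrelay : Rs ≤ (1 / 2) * Cfun (hsr ^ 2 * P)) :
    RbarSym hd hc hr hsr P - Rs ≤
      1 + (1 / 2) * Real.logb 2 3 + (1 / 2) * Real.logb 2 5 + Cfun (hsr ^ 2 / hc ^ 2) := by
  have hCs : 0 ≤ Cfun (hsr ^ 2 / hc ^ 2) := Cfun_nonneg (by positivity)
  have hlog5 : (1:ℝ) ≤ Real.logb 2 5 := one_le_logb_two_five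
  have h1 : RbarSym hd hc hr hsr P ≤ (1 / 2) * RbarS1 hd hc hr hsr P :=
    (min_le_left _ _).trans (min_le_left _ _)
  have h2 : RbarSym hd hc hr hsr P ≤ (1 / 2) * RbarS2 hd hc hr hsr P :=
    (min_le_left _ _).trans (min_le_right _ _)
  have h3 : RbarSym hd hc hr hsr P ≤ Rind hd hr P := min_le_right _ _
  have hA := aux_RA hhd hhc hhr hhsr hP hcP
  have hB := aux_RB hhd hhc hhr hP hcP
  have hC := aux_RC hhd hhc hhr hhsr hP hcP
  have key : RbarSym hd hc hr hsr P ≤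
      min (min (RA hd hc hr P) (RB hd hc hr P)) (RC hd hc hr P)
        + (1 + (1 / 2) * Real.logb 2 5 + Cfun (hsr ^ 2 / hc ^ 2)) := by
    rcases le_total (min (RA hd hc hr P) (RB hd hc hr P)) (RC hd hc hr P) with h | h
    · rw [min_eq_left h]
      rcases le_total (RA hd hc hr P) (RB hd hc hr P) with h' | h'
      · rw [min_eq_left h']; linarith
      · rw [min_eq_right h']; linarith
    · rw [min_eq_right h]; linarith
  rw [hRs]
  linarith
end

section
/- Let h_d, h_c, h_r, h_sr > 0 and P > 0 with h_r² ≤ min(h_d², h_c²) and h_c² > h_d². If R_C^IC ≤ R_D^IC, then R̄_sym − R_C^IC ≤ 1. -/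
/-- ETW Han–Kobayashi symmetric rate, weak interference, case A. -/
noncomputable def RAIC (hd hc P : ℝ) : ℝ := Cfun (hc ^ 2 * P + hd ^ 2 / hc ^ 2) - 1 / 2

/-- ETW Han–Kobayashi symmetric rate, weak interference, case B. -/
noncomputable def RBIC (hd hc P : ℝ) : ℝ :=
  (1 / 2) * Cfun (hd ^ 2 * P + hc ^ 2 * P) + (1 / 2) * Cfun (hd ^ 2 / hc ^ 2) - 1 / 2

/-- ETW Han–Kobayashi symmetric rate, strong interference, case C. -/
noncomputable def RCIC (hd P : ℝ) : ℝ := Cfun (hd ^ 2 * P)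

/-- ETW Han–Kobayashi symmetric rate, strong interference, case D. -/
noncomputable def RDIC (hd hc P : ℝ) : ℝ := (1 / 2) * Cfun (hd ^ 2 * P + hc ^ 2 * P)

theorem stmt12 (hd hc hr hsr P : ℝ)
    (hhd : 0 < hd) (hhc : 0 < hc) (hhr : 0 < hr) (hhsr : 0 < hsr) (hP : 0 < P)
    (hweak : hr ^ 2 ≤ min (hd ^ 2) (hc ^ 2))
    (hcd : hd ^ 2 < hc ^ 2) (hCD : RCIC hd P ≤ RDIC hd hc P) :
    RbarSym hd hc hr hsr P - (RCIC hd P) ≤ (1 : ℝ) := by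
  have hrd : hr ≤ hd := by
    have := le_trans hweak (min_le_left _ _)
    nlinarith
  have hb : (0:ℝ) < 1 + hd ^ 2 * P := by positivity
  have key : Rind hd hr P - RCIC hd P ≤ 1 := by
    unfold Rind RCIC Cfun
    have ha : (0:ℝ) < 1 + P * (hd + hr) ^ 2 := by positivity
    have hle : 1 + P * (hd + hr) ^ 2 ≤ 4 * (1 + hd ^ 2 * P) := by
      nlinarith [mul_le_mul_of_nonneg_left (show (hd + hr) ^ 2 ≤ 4 * hd ^ 2 by nlinarith) hP.le]
    have hlog : Real.logb 2 (1 + P * (hd + hr) ^ 2) ≤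
        Real.logb 2 (4 * (1 + hd ^ 2 * P)) :=
      Real.logb_le_logb_of_le (by norm_num) ha hle
    have h4 : Real.logb 2 (4 * (1 + hd ^ 2 * P)) =
        2 + Real.logb 2 (1 + hd ^ 2 * P) := by
      rw [Real.logb_mul (by norm_num) (ne_of_gt hb)]
      have : Real.logb 2 4 = 2 := by
        rw [show (4:ℝ) = 2 ^ (2:ℕ) by norm_num, Real.logb_pow,
          Real.logb_self_eq_one (by norm_num)]
        norm_num
      rw [this]
    nlinarith [hlog, h4.le, h4.ge]
  have hmin : RbarSym hd hc hr hsr P ≤ Rind hd hr P := min_le_right _ _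
  linarith
end
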